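/- Let a ∈ ℝ, n ∈ ℕ, and let f_n : ℝ → ℂ be measurable and bounded on a pointed neighborhood (a−δ, a+δ)∖{a} of a for some δ > 0. Then for every test function φ, the scaled pairings of the distribution ∂_aⁿ f_n at a are bounded as ε → 0⁺: there exist ε₁ > 0 and M ≥ 0 such that for all 0 < ε < ε₁, |∫_ℝ f_n(x) (A_aⁿ φ_{ε})(x) dx| ≤ M, where φ_{ε}(x) = ε⁻¹ φ((x−a)/ε). -/

import Mathlib

open Filter MeasureTheory Set

/-- The operator `A_a`, formal adjoint of `∂_a g = ((x - a) g)'`: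
`(A_a φ)(x) = -(x - a) φ'(x)`. -/
noncomputable def Aop (a : ℝ) (φ : ℝ → ℂ) : ℝ → ℂ :=
  fun x => -((x - a : ℝ) : ℂ) * deriv φ x

lemma Aop_contDiff (a : ℝ) {g : ℝ → ℂ} (hg : ContDiff ℝ (⊤ : ℕ∞) g) :
    ContDiff ℝ (⊤ : ℕ∞) (Aop a g) := by
  have hd : ContDiff ℝ (⊤ : ℕ∞) (deriv g) := by
    have h : ContDiff ℝ (((⊤ : ℕ∞) : WithTop ℕ∞) + 1) g := by
      rw [show (((⊤ : ℕ∞) : WithTop ℕ∞) + 1) = ((⊤ : ℕ∞) : WithTop ℕ∞) from rfl]; exact hg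
    exact (contDiff_succ_iff_deriv.mp h).2.2
  exact (ContDiff.neg (Complex.ofRealCLM.contDiff.comp
    (contDiff_id.sub contDiff_const))).mul hd

lemma Aop_iter_contDiff (a : ℝ) (k : ℕ) {g : ℝ → ℂ} (hg : ContDiff ℝ (⊤ : ℕ∞) g) :
    ContDiff ℝ (⊤ : ℕ∞) ((Aop a)^[k] g) := by
  induction k with
  | zero => exact hg
  | succ k ih =>
    rw [Function.iterate_succ_apply']
    exact Aop_contDiff a ih

lemma Aop_iter_supp (a : ℝ) (k : ℕ) {g : ℝ → ℂ} (hg : ContDiff ℝ (⊤ : ℕ∞) g)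
    (hs : HasCompactSupport g) : HasCompactSupport ((Aop a)^[k] g) := by
  induction k with
  | zero => exact hs
  | succ k ih =>
    rw [Function.iterate_succ_apply']
    have : HasCompactSupport (deriv ((Aop a)^[k] g)) := ih.deriv
    exact this.mul_left

lemma Aop_scale (a ε : ℝ) (hε : ε ≠ 0) {g : ℝ → ℂ} (hg : ContDiff ℝ (⊤ : ℕ∞) g) :
    Aop a (fun y : ℝ => (ε : ℂ)⁻¹ * g ((y - a) / ε)) =
      fun y : ℝ => (ε : ℂ)⁻¹ * (Aop 0 g) ((y - a) / ε) := by
  have hgd : Differentiable ℝ g := hg.differentiable (by simp)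
  funext y
  have h1 : HasDerivAt (fun y : ℝ => (y - a) / ε) (1 / ε) y := by
    simpa using ((hasDerivAt_id y).sub_const a).div_const ε
  have h2 : HasDerivAt (fun y : ℝ => g ((y - a) / ε))
      ((1 / ε : ℝ) • deriv g ((y - a) / ε)) y :=
    ((hgd _).hasDerivAt).scomp y h1
  have h3 : HasDerivAt (fun y : ℝ => (ε : ℂ)⁻¹ * g ((y - a) / ε))
      ((ε : ℂ)⁻¹ * ((1 / ε : ℝ) • deriv g ((y - a) / ε))) y := h2.const_mul _
  have hderiv : deriv (fun y : ℝ => (ε : ℂ)⁻¹ * g ((y - a) / ε)) y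
      = (ε : ℂ)⁻¹ * ((1 / ε : ℝ) • deriv g ((y - a) / ε)) := h3.deriv
  simp only [Aop, hderiv, Complex.real_smul]
  have hε' : (ε : ℂ) ≠ 0 := by exact_mod_cast hε
  push_cast
  field_simp
  ring

lemma Aop_iter_scale (a ε : ℝ) (hε : ε ≠ 0) (n : ℕ) {g : ℝ → ℂ}
    (hg : ContDiff ℝ (⊤ : ℕ∞) g) :
    (Aop a)^[n] (fun y : ℝ => (ε : ℂ)⁻¹ * g ((y - a) / ε)) =
      fun y : ℝ => (ε : ℂ)⁻¹ * ((Aop 0)^[n] g) ((y - a) / ε) := by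
  induction n with
  | zero => rfl
  | succ n ih =>
    rw [Function.iterate_succ_apply', ih,
      Aop_scale a ε hε (Aop_iter_contDiff 0 n hg),
      show (Aop 0)^[n + 1] g = Aop 0 ((Aop 0)^[n] g) from
        Function.iterate_succ_apply' _ _ _]

/-- If `f_n` is measurable and bounded on a pointed neighborhood
of `a`, then for every test function `φ` the scaled pairings
`⟨∂_aⁿ f_n, φ_ε⟩ = ∫ f_n · (A_aⁿ φ_ε)`, with `φ_ε(x) = ε⁻¹ φ((x-a)/ε)`, are
bounded as `ε → 0⁺`. -/
theorem stmt_12 (a : ℝ) (n : ℕ) (f_n : ℝ → ℂ) (δ : ℝ) (hδ : 0 < δ)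
    (hmeas : Measurable f_n)
    (hbdd : ∃ M : ℝ, ∀ x ∈ Ioo (a - δ) (a + δ) \ {a}, ‖f_n x‖ ≤ M) :
    ∀ φ : ℝ → ℂ, ContDiff ℝ (⊤ : ℕ∞) φ → HasCompactSupport φ →
      ∃ ε₁ M : ℝ, 0 < ε₁ ∧ 0 ≤ M ∧ ∀ ε : ℝ, 0 < ε → ε < ε₁ →
        ‖∫ x : ℝ, f_n x *
          ((Aop a)^[n] (fun y : ℝ => (ε : ℂ)⁻¹ * φ ((y - a) / ε))) x‖ ≤ M := by
  intro φ hφ hφs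
  obtain ⟨Mf, hMf⟩ := hbdd
  set ψ : ℝ → ℂ := (Aop 0)^[n] φ with hψ
  have hψc : ContDiff ℝ (⊤ : ℕ∞) ψ := Aop_iter_contDiff 0 n hφ
  have hψs : HasCompactSupport ψ := Aop_iter_supp 0 n hφ hφs
  -- bound for ψ
  obtain ⟨C, hC⟩ := (hψc.continuous.bounded_above_of_compact_support hψs)
  have hC0 : 0 ≤ C := le_trans (norm_nonneg _) (hC 0)
  -- radius of support of ψ
  obtain ⟨R, hR0, hRsupp⟩ : ∃ R : ℝ, 0 < R ∧ tsupport ψ ⊆ Icc (-R) R := by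
    obtain ⟨R, hR⟩ := (hψs.isCompact.isBounded).subset_closedBall 0
    refine ⟨max R 1, lt_of_lt_of_le one_pos (le_max_right _ _), fun x hx => ?_⟩
    have := hR hx
    simp only [Metric.mem_closedBall, Real.dist_eq, sub_zero] at this
    have : |x| ≤ max R 1 := le_trans this (le_max_left _ _)
    exact abs_le.mp this |>.imp (fun h => by linarith [abs_le.mp ‹|x| ≤ max R 1›])
      (fun h => h) |> fun h => ⟨h.1, h.2⟩
  set Mf' : ℝ := max Mf 0 with hMf'
  refine ⟨δ / R, 2 * R * (Mf' * C), div_pos hδ hR0, by positivity, ?_⟩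
  intro ε hε hεlt
  have hεne : ε ≠ 0 := ne_of_gt hε
  rw [Aop_iter_scale a ε hεne n hφ]
  set F : ℝ → ℂ := fun x => f_n x * ((ε : ℂ)⁻¹ * ψ ((x - a) / ε)) with hF
  have hεR : ε * R < δ := (lt_div_iff₀ hR0).mp hεlt
  -- F vanishes outside Ioo (a - ε*R) (a + ε*R) ∪ endpoints; use Icc
  have hsupp : ∀ x, x ∉ Icc (a - ε * R) (a + ε * R) → F x = 0 := by
    intro x hx
    have hxψ : ψ ((x - a) / ε) = 0 := by
      apply image_eq_zero_of_notMem_tsupport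
      intro hmem
      have h := hRsupp hmem
      simp only [mem_Icc] at h hx
      have h1 : -R * ε ≤ x - a := (le_div_iff₀ hε).mp h.1
      have h2 : x - a ≤ R * ε := (div_le_iff₀ hε).mp h.2
      exact hx ⟨by nlinarith, by nlinarith⟩
    simp [hF, hxψ]
  have hInt : (∫ x : ℝ, F x) = ∫ x in Icc (a - ε * R) (a + ε * R), F x :=
    (setIntegral_eq_integral_of_forall_compl_eq_zero hsupp).symm
  rw [hInt]
  have hmeasI : volume (Icc (a - ε * R) (a + ε * R)) < ⊤ := by
    rw [Real.volume_Icc]; exact ENNReal.ofReal_lt_top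
  have hbound : ∀ᵐ x : ℝ, x ∈ Icc (a - ε * R) (a + ε * R) → ‖F x‖ ≤ Mf' * ε⁻¹ * C := by
    have hae : ∀ᵐ x : ℝ, x ≠ a := by
      refine ae_iff.mpr ?_
      simp only [ne_eq, not_not, Set.setOf_eq_eq_singleton]
      exact Real.volume_singleton
    filter_upwards [hae] with x hxa hx
    have hx' : x ∈ Ioo (a - δ) (a + δ) \ {a} := by
      simp only [mem_Icc] at hx
      constructor
      · constructor <;> nlinarith [hx.1, hx.2]
      · simpa using hxa
    have h1 : ‖f_n x‖ ≤ Mf' := le_trans (hMf x hx') (le_max_left _ _)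
    calc ‖F x‖ = ‖f_n x‖ * (ε⁻¹ * ‖ψ ((x - a) / ε)‖) := by
          rw [hF]
          rw [norm_mul, norm_mul, norm_inv, Complex.norm_real,
            Real.norm_eq_abs, abs_of_pos hε]
      _ ≤ Mf' * (ε⁻¹ * C) := by
          apply mul_le_mul h1 _ (by positivity) (le_max_right _ _)
          exact mul_le_mul_of_nonneg_left (hC _) (le_of_lt (inv_pos.mpr hε))
      _ = Mf' * ε⁻¹ * C := by ring
  have hnorm := norm_setIntegral_le_of_norm_le_const_ae' hmeasI hbound
  refine le_trans hnorm ?_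
  rw [measureReal_def, Real.volume_Icc, ENNReal.toReal_ofReal (by nlinarith)]
  have : a + ε * R - (a - ε * R) = 2 * (ε * R) := by ring
  rw [this]
  have hεinv : ε⁻¹ * ε = 1 := inv_mul_cancel₀ hεne
  have : Mf' * ε⁻¹ * C * (2 * (ε * R)) = 2 * R * (Mf' * C) * (ε⁻¹ * ε) := by ring
  rw [this, hεinv, mul_one]
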